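/- arXiv:1508.07627 — 2 statements merged into one kernel-verified Lean document; each statement's English description precedes it below -/
import Mathlib

section
/- Let A be a finite connected multigraph with at least two (edge-distinct) cycles, and let e be an edge of the kernel ⌊A⌋. Then every component of A \ e contains a cycle. -/
open Set

/-- A multigraph on vertex type `V` with edge type `E`: each edge has an
unordered pair of endpoints (loops allowed). -/
structure Multigraph (V : Type*) (E : Type*) where
  inc : E → Sym2 V

namespace Multigraph

variable {V E : Type*} (G : Multigraph V E)

/-- The vertex star `S(x,G)`: the set of edges incident to `x`. -/
def star (x : V) : Set E := {e | x ∈ G.inc e}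

/-- The vertex set of the subgraph `G⟨X⟩` induced by an edge set `X`. -/
def verts (X : Set E) : Set V := {v | ∃ e ∈ X, v ∈ G.inc e}

/-- Degree of `v` in the subgraph with edge set `X` (a loop counts twice). -/
noncomputable def deg (X : Set E) (v : V) : ℕ :=
  {e ∈ X | v ∈ G.inc e}.ncard + {e ∈ X | G.inc e = s(v, v)}.ncard

/-- `Δ(G⟨X⟩) = |X| - |V(G⟨X⟩)|`. -/
noncomputable def delta (X : Set E) : ℤ := (X.ncard : ℤ) - ((G.verts X).ncard : ℤ)

/-- Adjacency via an edge of `X`. -/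
def Adj (X : Set E) (a b : V) : Prop := ∃ e ∈ X, G.inc e = s(a, b)

/-- Reachability in the subgraph with edge set `X`. -/
def Reach (X : Set E) : V → V → Prop := Relation.ReflTransGen (G.Adj X)

/-- The subgraph `G⟨X⟩` is connected. -/
def ConnectedOn (X : Set E) : Prop :=
  ∀ a ∈ G.verts X, ∀ b ∈ G.verts X, G.Reach X a b

/-- The edge set of the component of `G⟨X⟩` containing the edge `e`. -/
def edgeComponent (X : Set E) (e : E) : Set E :=
  {f ∈ X | ∃ a ∈ G.inc e, ∃ b ∈ G.inc f, G.Reach X a b}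

/-- The vertex set of the component of the spanning subgraph `(V, X)` containing `v`. -/
def vertexComponent (X : Set E) (v : V) : Set V := {u | G.Reach X v u}

/-- The set of (vertex sets of) components of the spanning subgraph `(V, X)`. -/
def comps (X : Set E) : Set (Set V) := {W | ∃ v : V, W = G.vertexComponent X v}

/-- The component `W` of the spanning subgraph `(V, X)` is a tree:
it is connected and has one more vertex than edges. -/
def TreeOn (X : Set E) (W : Set V) : Prop :=
  (∀ u ∈ W, ∀ w ∈ W, G.Reach X u w) ∧
  ({f ∈ X | ∀ a ∈ G.inc f, a ∈ W}).ncard + 1 = W.ncard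

/-- The edge set `X` forms a cycle: nonempty, connected, all degrees `2`. -/
def IsCycleSet (X : Set E) : Prop :=
  X.Nonempty ∧ G.ConnectedOn X ∧ ∀ v ∈ G.verts X, G.deg X v = 2

/-- `G⟨X⟩` is a cacti-graph: no isolated vertices, no leaves
(i.e. all degrees at least `2`), and no component is a cycle. -/
def CactiSet (X : Set E) : Prop :=
  (∀ v ∈ G.verts X, 2 ≤ G.deg X v) ∧
  ∀ e ∈ X, ¬ G.IsCycleSet (G.edgeComponent X e)

/-- The circuits of the `k`-circular matroid `M_k(G)`:
edge sets `C` with `Δ(G⟨C⟩) = k` and `G⟨C⟩` a cacti-graph. -/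
def CircuitSet (k : ℕ) (X : Set E) : Prop :=
  G.delta X = (k : ℤ) ∧ G.CactiSet X

/-- Some component of `G⟨X⟩` is a tree. -/
def HasTreeComponent (X : Set E) : Prop :=
  ∃ e ∈ X,
    (G.edgeComponent X e).ncard + 1 = (G.verts (G.edgeComponent X e)).ncard

/-- The edge set of the kernel `⌊G⌋`: the maximal subgraph with
no leaves and no isolated vertices. -/
def kernelE : Set E := ⋃₀ {X : Set E | ∀ v ∈ G.verts X, 2 ≤ G.deg X v}

end Multigraph

namespace Multigraph

variable {V E : Type*} {G : Multigraph V E}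

-- ### helper lemmas

lemma aux_sym2_exists (z : Sym2 V) : ∃ x y, z = s(x, y) := by
  induction z using Sym2.ind with
  | _ x y => exact ⟨x, y, rfl⟩

lemma aux_verts_mono {X X' : Set E} (h : X ⊆ X') : G.verts X ⊆ G.verts X' := by
  rintro v ⟨e, he, hv⟩; exact ⟨e, h he, hv⟩

lemma aux_adj_symm {X : Set E} : Symmetric (G.Adj X) := by
  rintro a b ⟨e, he, hinc⟩; exact ⟨e, he, hinc.trans Sym2.eq_swap⟩

lemma aux_reach_symm {X : Set E} : Symmetric (G.Reach X) :=
  by haveI : Std.Symm (G.Adj X) := ⟨fun a b h => aux_adj_symm h⟩; exact fun a b h => (Relation.ReflTransGen.stdSymm (r := G.Adj X)).symm a b h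

lemma aux_reach_trans {X : Set E} {a b c : V} (h1 : G.Reach X a b) (h2 : G.Reach X b c) :
    G.Reach X a c := Relation.ReflTransGen.trans h1 h2

lemma aux_adj_reach {X : Set E} {a b : V} (h : G.Adj X a b) : G.Reach X a b :=
  Relation.ReflTransGen.single h

lemma aux_loop_cycle {f : E} {x : V} (hf : G.inc f = s(x, x)) : G.IsCycleSet {f} := by
  have hverts : G.verts {f} = {x} := by
    ext v
    simp only [verts, mem_setOf_eq, mem_singleton_iff]
    constructor
    · rintro ⟨e, rfl, hv⟩
      rw [hf] at hv; simpa using hv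
    · rintro rfl; exact ⟨f, rfl, by rw [hf]; simp⟩
  refine ⟨⟨f, rfl⟩, ?_, ?_⟩
  · intro a ha b hb
    rw [hverts] at ha hb
    simp only [mem_singleton_iff] at ha hb
    subst ha; subst hb; exact Relation.ReflTransGen.refl
  · intro v hv
    rw [hverts] at hv
    simp only [mem_singleton_iff] at hv
    subst hv
    have h1 : {e ∈ ({f} : Set E) | v ∈ G.inc e} = {f} := by
      ext e; simp only [mem_setOf_eq, mem_singleton_iff]
      constructor
      · rintro ⟨rfl, _⟩; rfl
      · rintro rfl; exact ⟨rfl, by rw [hf]; simp⟩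
    have h2 : {e ∈ ({f} : Set E) | G.inc e = s(v, v)} = {f} := by
      ext e; simp only [mem_setOf_eq, mem_singleton_iff]
      constructor
      · rintro ⟨rfl, _⟩; rfl
      · rintro rfl; exact ⟨rfl, hf⟩
    rw [deg, h1, h2, Set.ncard_singleton]

lemma aux_parallel_cycle {f g : E} {x y : V} (hfg : f ≠ g) (hxy : x ≠ y)
    (hf : G.inc f = s(x, y)) (hg : G.inc g = s(x, y)) : G.IsCycleSet {f, g} := by
  have hverts : G.verts {f, g} = {x, y} := by
    ext v
    simp only [verts, mem_setOf_eq, mem_insert_iff, mem_singleton_iff]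
    constructor
    · rintro ⟨e, (rfl | rfl), hv⟩ <;> [rw [hf] at hv; rw [hg] at hv] <;> simpa using hv
    · rintro (rfl | rfl) <;> exact ⟨f, Or.inl rfl, by rw [hf]; simp⟩
  have hadj : G.Adj {f, g} x y := ⟨f, Or.inl rfl, hf⟩
  refine ⟨⟨f, Or.inl rfl⟩, ?_, ?_⟩
  · intro a ha b hb
    rw [hverts] at ha hb
    simp only [mem_insert_iff, mem_singleton_iff] at ha hb
    rcases ha with rfl | rfl <;> rcases hb with rfl | rfl
    · exact Relation.ReflTransGen.refl
    · exact aux_adj_reach hadj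
    · exact aux_reach_symm (aux_adj_reach hadj)
    · exact Relation.ReflTransGen.refl
  · intro v hv
    rw [hverts] at hv
    have key : ∀ w : V, w = x ∨ w = y → G.deg {f, g} w = 2 := by
      intro w hw
      have h1 : {e ∈ ({f, g} : Set E) | w ∈ G.inc e} = {f, g} := by
        ext e; simp only [mem_setOf_eq, mem_insert_iff, mem_singleton_iff]
        constructor
        · rintro ⟨h, _⟩; exact h
        · rintro (rfl | rfl) <;> [rw [hf]; rw [hg]] <;>
            rcases hw with rfl | rfl <;> simp
      have h2 : {e ∈ ({f, g} : Set E) | G.inc e = s(w, w)} = ∅ := by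
        ext e; simp only [mem_setOf_eq, mem_empty_iff_false, iff_false, not_and]
        rintro (rfl | rfl) <;> [rw [hf]; rw [hg]] <;>
          intro h <;> rw [Sym2.eq_iff] at h <;>
          rcases hw with rfl | rfl <;> tauto
      rw [deg, h1, h2, Set.ncard_pair hfg, Set.ncard_empty]
    simp only [mem_insert_iff, mem_singleton_iff] at hv
    exact key v hv


-- arithmetic helpers
private lemma aux_mod1 {n j : ℕ} (hn : 1 ≤ n) (hj : j < n) :
    ((j + (n-1)) % n + 1) % n = j := by
  rcases Nat.eq_zero_or_pos j with rfl | hj1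
  · rw [Nat.mod_eq_of_lt (by omega : 0 + (n - 1) < n)]
    rw [(by omega : 0 + (n - 1) + 1 = n), Nat.mod_self]
  · have h1 : (j + (n-1)) % n = j - 1 := by
      have h2 : j + (n-1) - n = j - 1 := by omega
      rw [Nat.mod_eq_sub_mod (by omega), h2, Nat.mod_eq_of_lt (by omega)]
    rw [h1, (by omega : j - 1 + 1 = j), Nat.mod_eq_of_lt hj]

private lemma aux_mod2 {n i : ℕ} (hn : 2 ≤ n) (h : i < n) (h2 : (i+1) % n = i) : False := by
  rcases Nat.lt_or_ge (i+1) n with h' | h'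
  · rw [Nat.mod_eq_of_lt h'] at h2; omega
  · have h3 : i + 1 = n := by omega
    rw [h3, Nat.mod_self] at h2; omega

private lemma aux_mod3 {n j : ℕ} (hn : 3 ≤ n) (h : j < n) (h2 : (j+2) % n = j) : False := by
  rcases Nat.lt_or_ge (j+2) n with h' | h'
  · rw [Nat.mod_eq_of_lt h'] at h2; omega
  · have h3 : j + 2 - n < n := by omega
    rw [Nat.mod_eq_sub_mod h', Nat.mod_eq_of_lt h3] at h2; omega

private lemma aux_mod4 {n i p : ℕ} (hi : i < n) (hp : p < n)
    (h : (i+1) % n = (p+1) % n) : i = p := by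
  rcases Nat.lt_or_ge (i+1) n with h1 | h1 <;> rcases Nat.lt_or_ge (p+1) n with h2 | h2
  · rw [Nat.mod_eq_of_lt h1, Nat.mod_eq_of_lt h2] at h; omega
  · rw [Nat.mod_eq_of_lt h1, (by omega : p + 1 = n), Nat.mod_self] at h; omega
  · rw [Nat.mod_eq_of_lt h2, (by omega : i + 1 = n), Nat.mod_self] at h; omega
  · omega

lemma aux_cycle_of_fn {n : ℕ} (hn : 3 ≤ n) {Y : Set E} (c : ℕ → V) (g : ℕ → E)
    (hc : ∀ i, i < n → ∀ j, j < n → c i = c j → i = j)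
    (hgY : ∀ i, i < n → g i ∈ Y)
    (hg : ∀ i, i < n → G.inc (g i) = s(c i, c ((i+1) % n))) :
    G.IsCycleSet (g '' Set.Iio n) ∧ g '' Set.Iio n ⊆ Y ∧
      G.verts (g '' Set.Iio n) ⊆ c '' Set.Iio n := by
  set Z := g '' Set.Iio n with hZ
  have hnpos : 0 < n := by omega
  have ginj : ∀ i, i < n → ∀ j, j < n → g i = g j → i = j := by
    intro i hi j hj hgij
    have hinc : s(c i, c ((i+1) % n)) = s(c j, c ((j+1) % n)) := by
      rw [← hg i hi, ← hg j hj, hgij]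
    rw [Sym2.eq_iff] at hinc
    rcases hinc with ⟨h1, _⟩ | ⟨h1, h2⟩
    · exact hc i hi j hj h1
    · have hi1 : (i+1) % n < n := Nat.mod_lt _ hnpos
      have hj1 : (j+1) % n < n := Nat.mod_lt _ hnpos
      have e1 : i = (j+1) % n := hc i hi _ hj1 h1
      have e2 : (i+1) % n = j := hc _ hi1 j hj h2
      exfalso
      apply aux_mod3 hn hj
      calc (j + 2) % n = ((j+1) % n + 1) % n := by rw [Nat.mod_add_mod]
        _ = (i + 1) % n := by rw [← e1]
        _ = j := e2
  have hvertsZ : G.verts Z ⊆ c '' Set.Iio n := by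
    rintro v ⟨f', ⟨i, hi, rfl⟩, hv⟩
    rw [hg i hi] at hv
    rcases Sym2.mem_iff.mp hv with rfl | rfl
    · exact ⟨i, hi, rfl⟩
    · exact ⟨(i+1) % n, Nat.mod_lt _ hnpos, rfl⟩
  have hreach : ∀ j, j < n → G.Reach Z (c 0) (c j) := by
    intro j
    induction j with
    | zero => intro _; exact Relation.ReflTransGen.refl
    | succ j ih =>
      intro hj
      have hj' : j < n := by omega
      refine aux_reach_trans (ih hj') (aux_adj_reach ⟨g j, ⟨j, hj', rfl⟩, ?_⟩)
      rw [hg j hj', Nat.mod_eq_of_lt hj]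
  refine ⟨⟨⟨g 0, ⟨0, hnpos, rfl⟩⟩, ?_, ?_⟩, ?_, hvertsZ⟩
  · -- connected
    intro a ha b hb
    obtain ⟨i, hi, rfl⟩ := hvertsZ ha
    obtain ⟨j, hj, rfl⟩ := hvertsZ hb
    exact aux_reach_trans (aux_reach_symm (hreach i hi)) (hreach j hj)
  · -- degrees
    intro v hv
    obtain ⟨j, hj, rfl⟩ := hvertsZ hv
    simp only [mem_Iio] at hj
    set p := (j + (n-1)) % n with hpdef
    have hp : p < n := Nat.mod_lt _ hnpos
    have hp1 : (p + 1) % n = j := aux_mod1 (by omega) hj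
    have pnej : p ≠ j := by
      intro h
      rw [h] at hp1
      exact aux_mod2 (by omega) hj hp1
    have h1 : {f' ∈ Z | c j ∈ G.inc f'} = {g j, g p} := by
      ext f'
      simp only [mem_setOf_eq, mem_insert_iff, mem_singleton_iff]
      constructor
      · rintro ⟨⟨i, hi, rfl⟩, hv'⟩
        simp only [mem_Iio] at hi
        rw [hg i hi] at hv'
        rcases Sym2.mem_iff.mp hv' with h | h
        · left; rw [hc j hj i hi h]
        · right
          have hi1 : (i+1) % n < n := Nat.mod_lt _ hnpos
          have : (i + 1) % n = j := (hc j hj _ hi1 h).symm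
          have : i = p := aux_mod4 hi hp (by rw [this, hp1])
          rw [this]
      · rintro (rfl | rfl)
        · exact ⟨⟨j, hj, rfl⟩, by rw [hg j hj]; exact Sym2.mem_mk_left _ _⟩
        · refine ⟨⟨p, hp, rfl⟩, ?_⟩
          rw [hg p hp, hp1]
          exact Sym2.mem_mk_right _ _
    have h2 : {f' ∈ Z | G.inc f' = s(c j, c j)} = ∅ := by
      ext f'
      simp only [mem_setOf_eq, mem_empty_iff_false, iff_false, not_and]
      rintro ⟨i, hi, rfl⟩ h
      simp only [mem_Iio] at hi
      rw [hg i hi, Sym2.eq_iff] at h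
      have hi1 : (i+1) % n < n := Nat.mod_lt _ hnpos
      rcases h with ⟨ha, hb⟩ | ⟨ha, hb⟩ <;>
      · have e1 : i = j := hc i hi j hj ha
        have e2 : (i+1) % n = j := hc _ hi1 j hj hb
        exact aux_mod2 (by omega) hj (by rw [← e1] at e2 ⊢; exact e2)
    have hgg : g j ≠ g p := fun h => pnej ((ginj j hj p hp h).symm ▸ rfl)
    rw [deg, h1, h2, Set.ncard_empty, Set.ncard_pair (fun h => pnej (ginj j hj p hp h).symm)]
  · rintro f' ⟨i, hi, rfl⟩
    exact hgY i hi


private lemma aux_head? {α : Type*} (l : List α) (h : 0 < l.length) :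
    l.head? = some (l.get ⟨0, h⟩) := by
  cases l with
  | nil => simp at h
  | cons x t => simp

lemma aux_extract [Fintype V] [Fintype E] {Y : Set E} {a : V}
    (hloop : ∀ f ∈ Y, ∀ x : V, G.inc f ≠ s(x, x))
    (hinj : ∀ f ∈ Y, ∀ g ∈ Y, G.inc f = G.inc g → f = g)
    (htwo : ∀ u ∈ G.verts Y, u ≠ a →
      ∃ f ∈ Y, ∃ g ∈ Y, f ≠ g ∧ u ∈ G.inc f ∧ u ∈ G.inc g)
    (l : List V) (hne : l ≠ []) (hnd : l.Nodup) (hch : l.Chain' (G.Adj Y))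
    (hmem : ∀ x ∈ l, x ∈ G.verts Y)
    (hmax : ∀ l' : List V, l' ≠ [] → l'.Nodup → l'.Chain' (G.Adj Y) →
      (∀ x ∈ l', x ∈ G.verts Y) → l'.length ≤ l.length)
    (hlen : 2 ≤ l.length)
    (hhead : l.get ⟨0, by omega⟩ ≠ a) :
    ∃ Z ⊆ Y, G.IsCycleSet Z := by
  set v0 := l.get ⟨0, by omega⟩ with hv0
  set v1 := l.get ⟨1, by omega⟩ with hv1
  have hv0m : v0 ∈ G.verts Y := hmem _ (l.get_mem ⟨0, by omega⟩)
  obtain ⟨f1, hf1, f2, hf2, hf12, hm1, hm2⟩ := htwo v0 hv0m hhead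
  obtain ⟨w1, hw1⟩ := Sym2.mem_iff_exists.mp hm1
  obtain ⟨w2, hw2⟩ := Sym2.mem_iff_exists.mp hm2
  have hw12 : w1 ≠ w2 := by
    rintro rfl
    exact hf12 (hinj f1 hf1 f2 hf2 (hw1.trans hw2.symm))
  -- choose f, w with w ≠ v1
  obtain ⟨f, w, hf, hw, hwv1⟩ : ∃ f w, f ∈ Y ∧ G.inc f = s(v0, w) ∧ w ≠ v1 := by
    by_cases h : w1 = v1
    · exact ⟨f2, w2, hf2, hw2, fun hh => hw12 (h.trans hh.symm)⟩
    · exact ⟨f1, w1, hf1, hw1, h⟩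
  have hwv0 : w ≠ v0 := by
    rintro rfl
    exact hloop f hf v0 hw
  have hwl : w ∈ l := by
    by_contra hwl
    have h1 : (w :: l).Chain' (G.Adj Y) := by
      refine List.isChain_cons.mpr ⟨?_, hch⟩
      intro y hy
      rw [aux_head? l (by omega)] at hy
      simp only [Option.mem_def, Option.some.injEq] at hy
      subst hy
      exact ⟨f, hf, hw.trans Sym2.eq_swap⟩
    have h2 : ∀ x ∈ w :: l, x ∈ G.verts Y := by
      intro x hx
      rcases List.mem_cons.mp hx with rfl | hx
      · exact ⟨f, hf, by rw [hw]; exact Sym2.mem_mk_right _ _⟩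
      · exact hmem x hx
    have := hmax (w :: l) (by simp) (List.nodup_cons.mpr ⟨hwl, hnd⟩) h1 h2
    simp at this
  obtain ⟨⟨i, hilen⟩, hgetw⟩ := List.mem_iff_get.mp hwl
  have hi0 : i ≠ 0 := by
    rintro rfl
    exact hwv0 (by rw [hv0]; exact hgetw.symm)
  have hi1 : i ≠ 1 := by
    rintro rfl
    exact hwv1 (by rw [hv1]; exact hgetw.symm)
  have hi2 : 2 ≤ i := by omega
  set n := i + 1 with hn
  have hnl : n ≤ l.length := by omega
  set c : ℕ → V := fun j => l.getD j v0 with hc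
  have hcg : ∀ j (h : j < l.length), c j = l.get ⟨j, h⟩ := by
    intro j h
    simp [hc, List.getD_eq_getElem, h, List.get_eq_getElem]
  have hadj : ∀ j, j < i → G.Adj Y (c j) (c (j+1)) := by
    intro j hj
    have h1 : j < l.length - 1 := by omega
    have := List.isChain_iff_getElem.mp hch j (by omega)
    have h2 := hcg j (by omega); have h3 := hcg (j+1) (by omega)
    simp only [List.get_eq_getElem] at h2 h3
    rwa [← h2, ← h3] at this
  set g : ℕ → E := fun j => if h : j < i then (hadj j h).choose else f with hg
  have hgspec : ∀ j (h : j < i), g j ∈ Y ∧ G.inc (g j) = s(c j, c (j+1)) := by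
    intro j h
    have := (hadj j h).choose_spec
    simp only [hg, dif_pos h]
    exact ⟨this.1, this.2⟩
  have hgi : g i = f := by simp [hg]
  have hcinj : ∀ p, p < n → ∀ q, q < n → c p = c q → p = q := by
    intro p hp q hq hpq
    rw [hcg p (by omega), hcg q (by omega)] at hpq
    have := (List.Nodup.get_inj_iff hnd).mp hpq
    exact Fin.mk.injEq .. ▸ (by injection this)
  have hgY : ∀ j, j < n → g j ∈ Y := by
    intro j hj
    by_cases h : j < i
    · exact (hgspec j h).1
    · have : j = i := by omega
      rw [this, hgi]; exact hf
  have hginc : ∀ j, j < n → G.inc (g j) = s(c j, c ((j+1) % n)) := by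
    intro j hj
    by_cases h : j < i
    · rw [Nat.mod_eq_of_lt (by omega : j + 1 < n)]
      exact (hgspec j h).2
    · have hji : j = i := by omega
      subst hji
      rw [hgi, hn, Nat.mod_self]
      have hcj : c j = w := by rw [hcg j (by omega)]; exact hgetw
      have hc0 : c 0 = v0 := by rw [hcg 0 (by omega)]
      rw [hcj, hc0, hw]
      exact Sym2.eq_swap
  obtain ⟨hcyc, hsub, _⟩ := aux_cycle_of_fn (G := G) (by omega : 3 ≤ n) c g hcinj hgY hginc
  exact ⟨g '' Set.Iio n, hsub, hcyc⟩


lemma aux_exists_cycle_of_mindeg [Fintype V] [Fintype E] {Y : Set E} (hY : Y.Nonempty) (a : V)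
    (hdeg : ∀ v ∈ G.verts Y, v = a ∨ 2 ≤ G.deg Y v) : ∃ Z ⊆ Y, G.IsCycleSet Z := by
  by_cases hloopE : ∃ f ∈ Y, ∃ x : V, G.inc f = s(x, x)
  · obtain ⟨f, hf, x, hx⟩ := hloopE
    exact ⟨{f}, by simpa using hf, aux_loop_cycle hx⟩
  push_neg at hloopE
  by_cases hparE : ∃ f ∈ Y, ∃ g ∈ Y, f ≠ g ∧ G.inc f = G.inc g
  · obtain ⟨f, hf, g, hg, hfg, hincs⟩ := hparE
    obtain ⟨x, y, hxy⟩ := aux_sym2_exists (G.inc f)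
    have hxny : x ≠ y := by
      rintro rfl
      exact hloopE f hf x hxy
    refine ⟨{f, g}, ?_, aux_parallel_cycle hfg hxny hxy (hincs.symm.trans hxy)⟩
    rintro e (rfl | rfl) <;> assumption
  push_neg at hparE
  have hinj : ∀ f ∈ Y, ∀ g ∈ Y, G.inc f = G.inc g → f = g := by
    intro f hf g hg h
    by_contra hne
    exact hparE f hf g hg hne h
  have htwo : ∀ u ∈ G.verts Y, u ≠ a →
      ∃ f ∈ Y, ∃ g ∈ Y, f ≠ g ∧ u ∈ G.inc f ∧ u ∈ G.inc g := by
    intro u hu hua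
    have hd := (hdeg u hu).resolve_left hua
    have hloopset : {e ∈ Y | G.inc e = s(u, u)} = ∅ := by
      ext e
      simp only [mem_setOf_eq, mem_empty_iff_false, iff_false, not_and]
      intro he h
      exact hloopE e he u h
    rw [deg, hloopset, Set.ncard_empty, add_zero] at hd
    have hd1 : 1 < {e ∈ Y | u ∈ G.inc e}.ncard := by omega
    obtain ⟨f, g, hfm, hgm, hfg⟩ :=
      (Set.one_lt_ncard_iff (Set.toFinite _)).mp hd1
    exact ⟨f, hfm.1, g, hgm.1, hfg, hfm.2, hgm.2⟩
  -- the set of paths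
  set P : Set (List V) := {l | l ≠ [] ∧ l.Nodup ∧ l.Chain' (G.Adj Y) ∧
    ∀ x ∈ l, x ∈ G.verts Y} with hP
  have hPne : P.Nonempty := by
    obtain ⟨f0, hf0⟩ := hY
    obtain ⟨x, y, hxy⟩ := aux_sym2_exists (G.inc f0)
    refine ⟨[x], by simp, by simp, List.isChain_singleton _, ?_⟩
    intro z hz
    simp only [List.mem_singleton] at hz
    subst hz
    exact ⟨f0, hf0, by rw [hxy]; exact Sym2.mem_mk_left _ _⟩
  set T : Set ℕ := List.length '' P with hT
  have hTne : T.Nonempty := hPne.image _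
  have hTbdd : BddAbove T := by
    refine ⟨Fintype.card V, ?_⟩
    rintro m ⟨l, hl, rfl⟩
    exact List.Nodup.length_le_card hl.2.1
  obtain ⟨l, hlP, hlen⟩ : ∃ l ∈ P, l.length = sSup T := by
    obtain ⟨l, hl, hlen⟩ := Nat.sSup_mem hTne hTbdd
    exact ⟨l, hl, hlen⟩
  obtain ⟨hlne, hlnd, hlch, hlmem⟩ := hlP
  have hmax : ∀ l' : List V, l' ≠ [] → l'.Nodup → l'.Chain' (G.Adj Y) →
      (∀ x ∈ l', x ∈ G.verts Y) → l'.length ≤ l.length := by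
    intro l' h1 h2 h3 h4
    rw [hlen]
    exact le_csSup hTbdd ⟨l', ⟨h1, h2, h3, h4⟩, rfl⟩
  have hl2 : 2 ≤ l.length := by
    by_contra h
    have h1 : l.length = 1 := by
      have := List.length_pos_iff.mpr hlne
      omega
    obtain ⟨x0, rfl⟩ := List.length_eq_one_iff.mp h1
    have hx0 : x0 ∈ G.verts Y := hlmem x0 (by simp)
    obtain ⟨f', hf', hxm⟩ := hx0
    obtain ⟨u, hu⟩ := Sym2.mem_iff_exists.mp hxm
    have hux : u ≠ x0 := by
      rintro rfl
      exact hloopE f' hf' u hu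
    have := hmax [u, x0] (by simp) (by simp [hux])
      (List.isChain_cons_cons.mpr ⟨⟨f', hf', hu.trans Sym2.eq_swap⟩, by simp⟩)
      (by
        intro z hz
        rcases List.mem_cons.mp hz with rfl | hz
        · exact ⟨f', hf', by rw [hu]; exact Sym2.mem_mk_right _ _⟩
        · simp only [List.mem_singleton] at hz
          subst hz
          exact ⟨f', hf', hxm⟩)
    simp [h1] at this
  by_cases hva : l.get ⟨0, by omega⟩ ≠ a
  · exact aux_extract hloopE hinj htwo l hlne hlnd hlch hlmem hmax hl2 hva
  · push_neg at hva
    have hrne : l.reverse ≠ [] := by simpa using hlne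
    have hrnd : l.reverse.Nodup := List.nodup_reverse.mpr hlnd
    have hrch : l.reverse.Chain' (G.Adj Y) := by
      show List.IsChain _ _
      rw [List.isChain_reverse]
      exact List.IsChain.imp (fun p q hpq => aux_adj_symm hpq) hlch
    have hrmem : ∀ x ∈ l.reverse, x ∈ G.verts Y := by
      intro x hx
      exact hlmem x (List.mem_reverse.mp hx)
    have hrmax : ∀ l' : List V, l' ≠ [] → l'.Nodup → l'.Chain' (G.Adj Y) →
        (∀ x ∈ l', x ∈ G.verts Y) → l'.length ≤ l.reverse.length := by
      intro l' h1 h2 h3 h4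
      rw [List.length_reverse]
      exact hmax l' h1 h2 h3 h4
    have hrl2 : 2 ≤ l.reverse.length := by rwa [List.length_reverse]
    have hrhead : l.reverse.get ⟨0, by omega⟩ ≠ a := by
      have hget : l.reverse.get ⟨0, by omega⟩ = l.get ⟨l.length - 1, by omega⟩ := by
        simp [List.get_eq_getElem, List.getElem_reverse]
      rw [hget]
      intro hcon
      have : l.get ⟨l.length - 1, by omega⟩ = l.get ⟨0, by omega⟩ := hcon.trans hva.symm
      have := (List.Nodup.get_inj_iff hlnd).mp this
      have : l.length - 1 = 0 := by injection this
      omega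
    exact aux_extract hloopE hinj htwo l.reverse hrne hrnd hrch hrmem hrmax hrl2 hrhead


lemma aux_verts_single {f : E} {x y : V} (h : G.inc f = s(x, y)) :
    G.verts {f} = {x, y} := by
  ext v
  simp only [verts, mem_setOf_eq, mem_insert_iff, mem_singleton_iff]
  constructor
  · rintro ⟨e, rfl, hv⟩
    rw [h] at hv
    exact Sym2.mem_iff.mp hv
  · rintro (rfl | rfl) <;> exact ⟨f, rfl, by rw [h]; simp⟩

lemma aux_exists_cycle_of_card [Fintype V] [Fintype E] :
    ∀ N : ℕ, ∀ Y : Set E, Y.ncard ≤ N → Y.Nonempty →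
      (G.verts Y).ncard ≤ Y.ncard → ∃ Z ⊆ Y, G.IsCycleSet Z := by
  intro N
  induction N with
  | zero =>
    intro Y hN hne _
    exfalso
    have := (Set.ncard_pos (Set.toFinite Y)).mpr hne
    omega
  | succ N ih =>
    intro Y hYN hne hcard
    by_cases hmin : ∀ v ∈ G.verts Y, 2 ≤ G.deg Y v
    · obtain ⟨f0, hf0⟩ := hne
      obtain ⟨x, y, hxy⟩ := aux_sym2_exists (G.inc f0)
      exact aux_exists_cycle_of_mindeg ⟨f0, hf0⟩ x (fun v hv => Or.inr (hmin v hv))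
    · push_neg at hmin
      obtain ⟨v, hv, hdlt⟩ := hmin
      obtain ⟨f, hf, hvf⟩ := hv
      have hvY : v ∈ G.verts Y := ⟨f, hf, hvf⟩
      rw [deg] at hdlt
      set I : Set E := {e ∈ Y | v ∈ G.inc e} with hI
      set L : Set E := {e ∈ Y | G.inc e = s(v, v)} with hL
      have hfI : f ∈ I := ⟨hf, hvf⟩
      have hIpos : 1 ≤ I.ncard := (Set.ncard_pos (Set.toFinite I)).mpr ⟨f, hfI⟩
      have hLe : L = ∅ := by
        by_contra hLne
        have := (Set.ncard_pos (Set.toFinite L)).mpr (Set.nonempty_iff_ne_empty.mpr hLne)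
        omega
      have hdeg1 : I.ncard = 1 := by
        rw [hLe, Set.ncard_empty, add_zero] at hdlt
        omega
      have hIf : I = {f} := by
        obtain ⟨b, hb⟩ := Set.ncard_eq_one.mp hdeg1
        rw [hb] at hfI ⊢
        simp only [mem_singleton_iff] at hfI
        rw [hfI]
      obtain ⟨u, hu⟩ := Sym2.mem_iff_exists.mp hvf
      have huv : u ≠ v := by
        rintro rfl
        have : f ∈ L := ⟨hf, hu⟩
        rw [hLe] at this
        exact this
      set Y' := Y \ {f} with hY'
      have hvv' : v ∉ G.verts Y' := by
        rintro ⟨e, ⟨heY, hef⟩, hve⟩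
        have : e ∈ I := ⟨heY, hve⟩
        rw [hIf] at this
        exact hef this
      have hsub : G.verts Y' ⊆ G.verts Y \ {v} := by
        intro x hx
        refine ⟨aux_verts_mono Set.diff_subset hx, ?_⟩
        simp only [mem_singleton_iff]
        rintro rfl
        exact hvv' hx
      have hYfin : Y.Finite := Set.toFinite Y
      have hYpos : 1 ≤ Y.ncard := (Set.ncard_pos hYfin).mpr ⟨f, hf⟩
      have hY'card : Y'.ncard = Y.ncard - 1 := Set.ncard_diff_singleton_of_mem hf
      have hvcard : (G.verts Y \ {v}).ncard = (G.verts Y).ncard - 1 :=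
        Set.ncard_diff_singleton_of_mem hvY
      have hvpos : 1 ≤ (G.verts Y).ncard :=
        (Set.ncard_pos (Set.toFinite _)).mpr ⟨v, hvY⟩
      have hY'ne : Y'.Nonempty := by
        rw [Set.nonempty_iff_ne_empty]
        intro hemp
        have hYf : Y = {f} := by
          apply Set.eq_singleton_iff_unique_mem.mpr
          refine ⟨hf, fun e he => ?_⟩
          by_contra hef
          have : e ∈ Y' := ⟨he, hef⟩
          rw [hemp] at this
          exact this
        have h2 : (G.verts {f}).ncard = 2 := by
          rw [aux_verts_single hu, Set.ncard_pair (Ne.symm huv)]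
        rw [hYf, Set.ncard_singleton] at hcard
        omega
      have hcard' : (G.verts Y').ncard ≤ Y'.ncard := by
        have h1 : (G.verts Y').ncard ≤ (G.verts Y \ {v}).ncard :=
          Set.ncard_le_ncard hsub (Set.toFinite _)
        omega
      have hYN' : Y'.ncard ≤ N := by omega
      obtain ⟨Z, hZ, hcyc⟩ := ih Y' hYN' hY'ne hcard'
      exact ⟨Z, hZ.trans Set.diff_subset, hcyc⟩


lemma aux_reach_univ_cases {e : E} {a b : V} (hab : G.inc e = s(a, b)) :
    ∀ x y : V, G.Reach Set.univ x y →
      (G.Reach (Set.univ \ {e}) a x ∨ G.Reach (Set.univ \ {e}) b x) →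
      (G.Reach (Set.univ \ {e}) a y ∨ G.Reach (Set.univ \ {e}) b y) := by
  intro x y h
  induction h with
  | refl => exact id
  | tail h1 h2 ih =>
    intro hx
    obtain ⟨g, _, hg⟩ := h2
    by_cases hge : g = e
    · subst hge
      rw [hab, Sym2.eq_iff] at hg
      rcases hg with ⟨_, rfl⟩ | ⟨rfl, _⟩
      · right; exact Relation.ReflTransGen.refl
      · left; exact Relation.ReflTransGen.refl
    · rcases ih hx with h | h
      · left; exact aux_reach_trans h (aux_adj_reach ⟨g, ⟨Set.mem_univ g, hge⟩, hg⟩)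
      · right; exact aux_reach_trans h (aux_adj_reach ⟨g, ⟨Set.mem_univ g, hge⟩, hg⟩)

lemma aux_case2 [Fintype V] [Fintype E] {X : Set E}
    (hXdeg : ∀ u ∈ G.verts X, 2 ≤ G.deg X u)
    {e : E} (heX : e ∈ X) {a b v : V} (hab : G.inc e = s(a, b))
    (hav : G.Reach (Set.univ \ {e}) a v) (hbv : ¬ G.Reach (Set.univ \ {e}) b v) :
    ∃ Y : Set E, G.IsCycleSet Y ∧ Y ⊆ Set.univ \ {e} ∧
      G.verts Y ⊆ G.vertexComponent (Set.univ \ {e}) v := by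
  set Y' := Set.univ \ {e} with hY'
  have hanb : a ≠ b := by
    rintro rfl
    exact hbv hav
  have haW : G.Reach Y' v a := aux_reach_symm hav
  set X1 : Set E := {f ∈ X | f ≠ e ∧ ∀ u ∈ G.inc f, G.Reach Y' v u} with hX1
  have key : ∀ f ∈ X, f ≠ e → ∀ u ∈ G.inc f, G.Reach Y' v u → f ∈ X1 := by
    intro f hfX hfe u hu hru
    refine ⟨hfX, hfe, ?_⟩
    obtain ⟨x, y, hxy⟩ := aux_sym2_exists (G.inc f)
    have hadj : G.Adj Y' x y := ⟨f, ⟨Set.mem_univ f, hfe⟩, hxy⟩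
    rw [hxy] at hu ⊢
    intro u' hu'
    rcases Sym2.mem_iff.mp hu with rfl | rfl <;>
      rcases Sym2.mem_iff.mp hu' with rfl | rfl
    · exact hru
    · exact aux_reach_trans hru (aux_adj_reach hadj)
    · exact aux_reach_trans hru (aux_adj_reach (aux_adj_symm hadj))
    · exact hru
  have haverts : a ∈ G.verts X := ⟨e, heX, by rw [hab]; exact Sym2.mem_mk_left _ _⟩
  have ha2 : ∃ f ∈ X, a ∈ G.inc f ∧ f ≠ e := by
    by_contra hcon
    push_neg at hcon
    have hsub : {f ∈ X | a ∈ G.inc f} ⊆ {e} := by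
      intro f ⟨hf1, hf2⟩
      exact hcon f hf1 hf2
    have h1 : {f ∈ X | a ∈ G.inc f}.ncard ≤ 1 := by
      have := Set.ncard_le_ncard hsub (Set.finite_singleton e)
      rwa [Set.ncard_singleton] at this
    have h2 : {f ∈ X | G.inc f = s(a, a)} = ∅ := by
      ext f
      simp only [mem_setOf_eq, mem_empty_iff_false, iff_false, not_and]
      intro hfX hfa
      have hfe : f = e := hcon f hfX (by rw [hfa]; exact Sym2.mem_mk_left _ _)
      subst hfe
      rw [hab, Sym2.eq_iff] at hfa
      tauto
    have := hXdeg a haverts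
    rw [deg, h2, Set.ncard_empty, add_zero] at this
    omega
  obtain ⟨f0, hf0X, hf0a, hf0e⟩ := ha2
  have hf0X1 : f0 ∈ X1 := key f0 hf0X hf0e a hf0a haW
  have hvertsX1 : ∀ u ∈ G.verts X1, G.Reach Y' v u := by
    rintro u ⟨f, hfX1, hu⟩
    exact hfX1.2.2 u hu
  have hdeg : ∀ u ∈ G.verts X1, u = a ∨ 2 ≤ G.deg X1 u := by
    intro u hu
    by_cases hua : u = a
    · exact Or.inl hua
    right
    have hru : G.Reach Y' v u := hvertsX1 u hu
    have hinc_sub : ∀ f ∈ X, u ∈ G.inc f → f ∈ X1 := by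
      intro f hfX hufm
      have hfe : f ≠ e := by
        rintro rfl
        rw [hab] at hufm
        rcases Sym2.mem_iff.mp hufm with rfl | rfl
        · exact hua rfl
        · exact hbv (aux_reach_symm hru)
      exact key f hfX hfe u hufm hru
    have h1 : {f ∈ X1 | u ∈ G.inc f} = {f ∈ X | u ∈ G.inc f} := by
      ext f
      simp only [mem_setOf_eq]
      constructor
      · rintro ⟨hf, hum⟩
        exact ⟨hf.1, hum⟩
      · rintro ⟨hf, hum⟩
        exact ⟨hinc_sub f hf hum, hum⟩
    have h2 : {f ∈ X1 | G.inc f = s(u, u)} = {f ∈ X | G.inc f = s(u, u)} := by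
      ext f
      simp only [mem_setOf_eq]
      constructor
      · rintro ⟨hf, hum⟩
        exact ⟨hf.1, hum⟩
      · rintro ⟨hf, hum⟩
        exact ⟨hinc_sub f hf (by rw [hum]; exact Sym2.mem_mk_left _ _), hum⟩
    have huX : u ∈ G.verts X := aux_verts_mono (fun f hf => hf.1) hu
    have := hXdeg u huX
    rw [deg] at this ⊢
    rw [h1, h2]
    exact this
  obtain ⟨Z, hZsub, hZcyc⟩ := aux_exists_cycle_of_mindeg ⟨f0, hf0X1⟩ a hdeg
  refine ⟨Z, hZcyc, ?_, ?_⟩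
  · intro f hf
    exact ⟨Set.mem_univ f, (hZsub hf).2.1⟩
  · intro u hu
    exact hvertsX1 u (aux_verts_mono hZsub hu)



end Multigraph


namespace Matroid

variable {α : Type*}

/-- A circuit of a matroid: a minimal dependent subset of the ground set. -/
def Circuit' (M : Matroid α) (C : Set α) : Prop :=
  C ⊆ M.E ∧ ¬ M.Indep C ∧ ∀ x ∈ C, M.Indep (C \ {x})

/-- A cocircuit of `M` is a circuit of the dual matroid `M✶`. -/
def Cocircuit' (M : Matroid α) (K : Set α) : Prop := M✶.Circuit' K

/-- The rank of a (finite) matroid: the common cardinality of its bases. -/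
noncomputable def rankN (M : Matroid α) : ℕ :=
  sSup {n | ∃ B, M.IsBase B ∧ B.ncard = n}

/-- The corank `ρ*(M)` of a matroid: the rank of the dual matroid. -/
noncomputable def corankN (M : Matroid α) : ℕ := M✶.rankN

/-- A matroid is connected if it has no loops, no coloops, and every two
elements of the ground set lie in a common circuit. -/
def ConnectedM (M : Matroid α) : Prop :=
  (∀ e ∈ M.E, M.Indep {e}) ∧ (∀ e ∈ M.E, ∃ B, M.IsBase B ∧ e ∉ B) ∧
  (∀ e ∈ M.E, ∀ f ∈ M.E, ∃ C, M.Circuit' C ∧ e ∈ C ∧ f ∈ C)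

end Matroid

/-- if `A` is a finite connected multigraph with at least two
cycles (`|E| ≥ |V| + 1`) and `e` is a kernel edge, then every component of
`A \ e` contains a cycle. -/
theorem stmt9 {V E : Type*} [Fintype V] [Fintype E] (G : Multigraph V E)
    (hconn : ∀ a b : V, G.Reach Set.univ a b)
    (hcard : Fintype.card V + 1 ≤ Fintype.card E)
    (e : E) (he : e ∈ G.kernelE) :
    ∀ v : V, ∃ Y : Set E, G.IsCycleSet Y ∧ Y ⊆ Set.univ \ {e} ∧
      G.verts Y ⊆ G.vertexComponent (Set.univ \ {e}) v := by
  intro v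
  obtain ⟨X, hXdeg, heX⟩ := he
  simp only [mem_setOf_eq] at hXdeg
  obtain ⟨a, b, hab⟩ := Multigraph.aux_sym2_exists (G.inc e)
  set Y' := Set.univ \ {e} with hY'
  have hall : ∀ y : V, G.Reach Y' a y ∨ G.Reach Y' b y := by
    intro y
    exact Multigraph.aux_reach_univ_cases hab a y (hconn a y) (Or.inl Relation.ReflTransGen.refl)
  by_cases hav : G.Reach Y' a v
  · by_cases hbv : G.Reach Y' b v
    · -- both endpoints reach v: the component is everything; use counting
      have hEcard : Y'.ncard = Fintype.card E - 1 := by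
        rw [hY', Set.ncard_diff_singleton_of_mem (Set.mem_univ e), Set.ncard_univ,
          Nat.card_eq_fintype_card]
      have hVpos : 1 ≤ Fintype.card V := Fintype.card_pos_iff.mpr ⟨a⟩
      have hverts_le : (G.verts Y').ncard ≤ Fintype.card V := by
        have := Set.ncard_le_ncard (Set.subset_univ (G.verts Y')) (Set.toFinite _)
        rwa [Set.ncard_univ, Nat.card_eq_fintype_card] at this
      have hY'ne : Y'.Nonempty := (Set.ncard_pos (Set.toFinite _)).mp (by omega)
      obtain ⟨Z, hZsub, hZcyc⟩ := Multigraph.aux_exists_cycle_of_card (G := G) Y'.ncard Y' le_rfl hY'ne (by omega)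
      refine ⟨Z, hZcyc, hZsub, ?_⟩
      intro u _
      rcases hall u with h | h
      · exact Multigraph.aux_reach_trans (Multigraph.aux_reach_symm hav) h
      · exact Multigraph.aux_reach_trans (Multigraph.aux_reach_symm hbv) h
    · exact Multigraph.aux_case2 hXdeg heX hab hav hbv
  · rcases hall v with h | hbv
    · exact absurd h hav
    · exact Multigraph.aux_case2 hXdeg heX (hab.trans Sym2.eq_swap) hbv hav
end

section
/- For a finite multigraph G and k ≥ 1, the family 𝒞_k(G) = { C ⊆ E(G) : the subgraph G⟨C⟩ induced by the edge set C satisfies |C| − |V(G⟨C⟩)| = k, and G⟨C⟩ has no isolated vertices, no leaves, and no component that is a single cycle } is the circuit family of a matroid on E(G); i.e., 𝒞_k(G) satisfies the circuit axioms (no member contains another, and the weak circuit elimination axiom). -/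
open Set

set_option linter.unusedSectionVars false
set_option linter.unusedVariables false
namespace Multigraph

lemma deg_def {V E : Type*} (G : Multigraph V E) (X : Set E) (v : V) :
    G.deg X v = {e ∈ X | v ∈ G.inc e}.ncard + {e ∈ X | G.inc e = s(v, v)}.ncard := rfl

private lemma sym2_exists {V : Type*} (z : Sym2 V) : ∃ a b, z = s(a, b) :=
  Sym2.ind (fun a b => ⟨a, b, rfl⟩) z

private lemma sym2_mem_exists {V : Type*} (z : Sym2 V) : ∃ a, a ∈ z := by
  obtain ⟨a, b, rfl⟩ := sym2_exists z
  exact ⟨a, Sym2.mem_mk_left a b⟩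

variable {V E : Type*} [Fintype V] [Fintype E] {G : Multigraph V E}

lemma verts_mono {X Y : Set E} (h : X ⊆ Y) : G.verts X ⊆ G.verts Y :=
  fun _ ⟨e, he, hv⟩ => ⟨e, h he, hv⟩

lemma verts_empty : G.verts (∅ : Set E) = ∅ := by
  ext v; simp [Multigraph.verts]

lemma verts_union {X Y : Set E} : G.verts (X ∪ Y) = G.verts X ∪ G.verts Y := by
  ext v
  constructor
  · rintro ⟨e, he | he, hv⟩
    · exact Or.inl ⟨e, he, hv⟩
    · exact Or.inr ⟨e, he, hv⟩
  · rintro (⟨e, he, hv⟩ | ⟨e, he, hv⟩)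
    · exact ⟨e, Or.inl he, hv⟩
    · exact ⟨e, Or.inr he, hv⟩

lemma loops_subset {X : Set E} {v : V} :
    {e ∈ X | G.inc e = s(v, v)} ⊆ {e ∈ X | v ∈ G.inc e} := by
  rintro e ⟨he, hl⟩
  exact ⟨he, by rw [hl]; exact Sym2.mem_mk_left v v⟩

lemma deg_mono {X Y : Set E} (h : X ⊆ Y) (v : V) : G.deg X v ≤ G.deg Y v := by
  rw [deg_def, deg_def]
  gcongr <;> first
    | exact Set.toFinite _
    | exact fun e ⟨he, h2⟩ => ⟨h he, h2⟩

lemma one_le_deg {X : Set E} {v : V} (hv : v ∈ G.verts X) : 1 ≤ G.deg X v := by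
  obtain ⟨e, he, hve⟩ := hv
  have : ({e} : Set E) ⊆ {e ∈ X | v ∈ G.inc e} := by
    rintro f rfl; exact ⟨he, hve⟩
  have h1 : 1 ≤ {e ∈ X | v ∈ G.inc e}.ncard := by
    simpa using Set.ncard_le_ncard this (Set.toFinite _)
  exact le_trans h1 (Nat.le_add_right _ _)

lemma verts_of_deg_pos {X : Set E} {v : V} (h : 0 < G.deg X v) : v ∈ G.verts X := by
  have hba : {e ∈ X | G.inc e = s(v, v)}.ncard ≤ {e ∈ X | v ∈ G.inc e}.ncard :=
    Set.ncard_le_ncard loops_subset (Set.toFinite _)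
  have ha : 0 < {e ∈ X | v ∈ G.inc e}.ncard := by
    rw [deg_def] at h; omega
  have hne : {e ∈ X | v ∈ G.inc e}.ncard ≠ 0 := by omega
  obtain ⟨e, he, hve⟩ := Set.nonempty_of_ncard_ne_zero hne
  exact ⟨e, he, hve⟩

lemma deg_congr {Z X : Set E} {v : V} (hZX : Z ⊆ X)
    (h : ∀ g ∈ X, v ∈ G.inc g → g ∈ Z) : G.deg Z v = G.deg X v := by
  rw [deg_def, deg_def]
  have h1 : {e ∈ Z | v ∈ G.inc e} = {e ∈ X | v ∈ G.inc e} := by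
    ext g; exact ⟨fun ⟨hg, hv⟩ => ⟨hZX hg, hv⟩, fun ⟨hg, hv⟩ => ⟨h g hg hv, hv⟩⟩
  have h2 : {e ∈ Z | G.inc e = s(v, v)} = {e ∈ X | G.inc e = s(v, v)} := by
    ext g
    refine ⟨fun ⟨hg, hv⟩ => ⟨hZX hg, hv⟩, fun ⟨hg, hv⟩ => ⟨h g hg ?_, hv⟩⟩
    rw [hv]; exact Sym2.mem_mk_left v v
  rw [h1, h2]

lemma reach_symm {X : Set E} {a b : V} (h : G.Reach X a b) : G.Reach X b a := by
  have hs : Symmetric (G.Adj X) := by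
    rintro x y ⟨e, he, hinc⟩
    exact ⟨e, he, hinc.trans Sym2.eq_swap⟩
  letI : Std.Symm (G.Adj X) := ⟨fun a b hab => hs hab⟩
  exact Std.Symm.symm (r := Relation.ReflTransGen (G.Adj X)) _ _ h

lemma reach_mono {X Y : Set E} (h : X ⊆ Y) {a b : V} (hr : G.Reach X a b) :
    G.Reach Y a b :=
  Relation.ReflTransGen.mono (r := G.Adj X) (p := G.Adj Y)
    (by intro x y hxy; obtain ⟨e, he, hi⟩ := hxy; exact ⟨e, h he, hi⟩) _ _ hr

lemma reach_of_mem_inc {X : Set E} {e : E} {a b : V} (he : e ∈ X)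
    (ha : a ∈ G.inc e) (hb : b ∈ G.inc e) : G.Reach X a b := by
  obtain ⟨x, y, hz⟩ := sym2_exists (G.inc e)
  rw [hz, Sym2.mem_iff] at ha hb
  by_cases hab : a = b
  · subst hab; exact Relation.ReflTransGen.refl
  · refine Relation.ReflTransGen.single ⟨e, he, ?_⟩
    rw [hz]
    rcases ha with rfl | rfl <;> rcases hb with rfl | rfl
    · exact absurd rfl hab
    · rfl
    · exact Sym2.eq_swap
    · exact absurd rfl hab

/-- closure of a vertex set under edges implies closure under reachability -/
lemma reach_closed {X : Set E} {S : Set V}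
    (hS : ∀ g ∈ X, ∀ a ∈ G.inc g, a ∈ S → ∀ b ∈ G.inc g, b ∈ S)
    {a b : V} (h : G.Reach X a b) (ha : a ∈ S) : b ∈ S := by
  induction h with
  | refl => exact ha
  | tail _ hbc ih =>
      obtain ⟨g, hg, hinc⟩ := hbc
      exact hS g hg _ (by rw [hinc]; exact Sym2.mem_mk_left _ _) ih _
        (by rw [hinc]; exact Sym2.mem_mk_right _ _)

lemma mem_edgeComponent_iff {X : Set E} {e f : E} (he : e ∈ X) :
    f ∈ G.edgeComponent X e ↔ f ∈ X ∧ ∀ a ∈ G.inc e, ∀ b ∈ G.inc f, G.Reach X a b := by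
  constructor
  · rintro ⟨hf, a0, ha0, b0, hb0, hr⟩
    refine ⟨hf, fun a ha b hb => ?_⟩
    exact ((reach_of_mem_inc he ha ha0).trans hr).trans (reach_of_mem_inc hf hb0 hb)
  · rintro ⟨hf, h⟩
    obtain ⟨a, ha⟩ := sym2_mem_exists (G.inc e)
    obtain ⟨b, hb⟩ := sym2_mem_exists (G.inc f)
    exact ⟨hf, a, ha, b, hb, h a ha b hb⟩

lemma mem_edgeComponent_self {X : Set E} {e : E} (he : e ∈ X) :
    e ∈ G.edgeComponent X e :=
  (mem_edgeComponent_iff he).mpr ⟨he, fun a ha b hb => reach_of_mem_inc he ha hb⟩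

lemma edgeComponent_subset {X : Set E} {e : E} : G.edgeComponent X e ⊆ X :=
  fun _ hf => hf.1

lemma edgeComponent_closed {X : Set E} {e g : E} {v : V} (he : e ∈ X)
    (hv : v ∈ G.verts (G.edgeComponent X e)) (hg : g ∈ X) (hvg : v ∈ G.inc g) :
    g ∈ G.edgeComponent X e := by
  obtain ⟨h, hh, hvh⟩ := hv
  rw [mem_edgeComponent_iff he] at hh ⊢
  refine ⟨hg, fun a ha b hb => ?_⟩
  exact ((hh.2 a ha v hvh).trans (reach_of_mem_inc hg hvg hb))

lemma deg_edgeComponent {X : Set E} {e : E} {v : V} (he : e ∈ X)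
    (hv : v ∈ G.verts (G.edgeComponent X e)) :
    G.deg (G.edgeComponent X e) v = G.deg X v :=
  deg_congr edgeComponent_subset (fun g hg hvg => edgeComponent_closed he hv hg hvg)

lemma reach_restrict {X : Set E} {e : E} (he : e ∈ X) {v w : V}
    (h : G.Reach X v w) (hv : v ∈ G.verts (G.edgeComponent X e)) :
    G.Reach (G.edgeComponent X e) v w := by
  induction h using Relation.ReflTransGen.head_induction_on with
  | refl => exact Relation.ReflTransGen.refl
  | head hac hcb ih =>
      rename_i a c
      obtain ⟨g, hg, hinc⟩ := hac
      have hgc : g ∈ G.edgeComponent X e :=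
        edgeComponent_closed he hv hg (by rw [hinc]; exact Sym2.mem_mk_left _ _)
      have hcv : c ∈ G.verts (G.edgeComponent X e) :=
        ⟨g, hgc, by rw [hinc]; exact Sym2.mem_mk_right _ _⟩
      exact Relation.ReflTransGen.head ⟨g, hgc, hinc⟩ (ih hcv)

lemma connectedOn_edgeComponent {X : Set E} {e : E} (he : e ∈ X) :
    G.ConnectedOn (G.edgeComponent X e) := by
  intro a ha b hb
  obtain ⟨g, hg, hag⟩ := ha
  obtain ⟨h, hh, hbh⟩ := hb
  obtain ⟨x, hx⟩ := sym2_mem_exists (G.inc e)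
  have h1 : G.Reach X x a := ((mem_edgeComponent_iff he).mp hg).2 x hx a hag
  have h2 : G.Reach X x b := ((mem_edgeComponent_iff he).mp hh).2 x hx b hbh
  exact reach_restrict he ((reach_symm h1).trans h2) ⟨g, hg, hag⟩

open Finset in
lemma ncard_sep_eq_filter (X : Set E) (P : E → Prop) [DecidablePred P] :
    {e ∈ X | P e}.ncard = (X.toFinite.toFinset.filter P).card := by
  rw [← Set.ncard_coe_finset]
  congr 1
  ext x
  simp [Set.Finite.mem_toFinset]

open Finset in
lemma handshake (X : Set E) :
    ∑ v ∈ (G.verts X).toFinite.toFinset, G.deg X v = 2 * X.ncard := by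
  classical
  set Vf := (G.verts X).toFinite.toFinset with hVf
  set Xf := X.toFinite.toFinset with hXf
  have key : ∀ e ∈ Xf,
      ((Vf.filter (fun v => v ∈ G.inc e)).card
        + (Vf.filter (fun v => G.inc e = s(v, v))).card) = 2 := by
    intro e he
    rw [hXf, Set.Finite.mem_toFinset] at he
    obtain ⟨a, b, hab⟩ := sym2_exists (G.inc e)
    have haX : a ∈ G.verts X := ⟨e, he, by rw [hab]; exact Sym2.mem_mk_left a b⟩
    have hbX : b ∈ G.verts X := ⟨e, he, by rw [hab]; exact Sym2.mem_mk_right a b⟩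
    by_cases hd : a = b
    · subst hd
      have h1 : Vf.filter (fun v => v ∈ G.inc e) = {a} := by
        ext v
        simp only [Finset.mem_filter, hVf, Set.Finite.mem_toFinset, Finset.mem_singleton,
          hab, Sym2.mem_iff, or_self]
        exact ⟨fun h => h.2, fun h => by subst h; exact ⟨haX, rfl⟩⟩
      have h2 : Vf.filter (fun v => G.inc e = s(v, v)) = {a} := by
        ext v
        simp only [Finset.mem_filter, hVf, Set.Finite.mem_toFinset, Finset.mem_singleton,
          hab, Sym2.eq_iff, or_self, and_self]
        exact ⟨fun h => h.2.symm, fun h => by subst h; exact ⟨haX, rfl⟩⟩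
      rw [h1, h2]; rfl
    · have h1 : Vf.filter (fun v => v ∈ G.inc e) = {a, b} := by
        ext v
        simp only [Finset.mem_filter, hVf, Set.Finite.mem_toFinset, Finset.mem_insert,
          Finset.mem_singleton, hab, Sym2.mem_iff]
        refine ⟨fun h => h.2, fun h => ⟨?_, h⟩⟩
        rcases h with rfl | rfl
        · exact haX
        · exact hbX
      have h2 : Vf.filter (fun v => G.inc e = s(v, v)) = ∅ := by
        ext v
        simp only [Finset.mem_filter, hVf, Set.Finite.mem_toFinset, Finset.notMem_empty,
          iff_false, hab, Sym2.eq_iff]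
        rintro ⟨-, (⟨rfl, rfl⟩ | ⟨rfl, rfl⟩)⟩ <;> exact hd rfl
      rw [h1, h2, Finset.card_pair hd]; rfl
  calc
    ∑ v ∈ Vf, G.deg X v
        = ∑ v ∈ Vf,
            ((Xf.filter (fun e => v ∈ G.inc e)).card
              + (Xf.filter (fun e => G.inc e = s(v, v))).card) := by
          refine Finset.sum_congr rfl fun v _ => ?_
          rw [deg_def, ncard_sep_eq_filter, ncard_sep_eq_filter]
    _ = ∑ v ∈ Vf, ∑ e ∈ Xf,
            ((if v ∈ G.inc e then 1 else 0) + (if G.inc e = s(v, v) then 1 else 0)) := by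
          refine Finset.sum_congr rfl fun v _ => ?_
          rw [Finset.sum_add_distrib, Finset.card_filter, Finset.card_filter]
    _ = ∑ e ∈ Xf, ∑ v ∈ Vf,
            ((if v ∈ G.inc e then 1 else 0) + (if G.inc e = s(v, v) then 1 else 0)) :=
          Finset.sum_comm
    _ = ∑ e ∈ Xf,
            ((Vf.filter (fun v => v ∈ G.inc e)).card
              + (Vf.filter (fun v => G.inc e = s(v, v))).card) := by
          refine Finset.sum_congr rfl fun e _ => ?_
          rw [Finset.sum_add_distrib, Finset.card_filter, Finset.card_filter]
    _ = ∑ _e ∈ Xf, 2 := Finset.sum_congr rfl key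
    _ = 2 * X.ncard := by
          rw [Finset.sum_const, smul_eq_mul, mul_comm, Set.ncard_eq_toFinset_card]

private lemma ncard_diff_int {α : Type*} [Finite α] {X Y : Set α} (h : X ⊆ Y) :
    ((Y \ X).ncard : ℤ) = (Y.ncard : ℤ) - (X.ncard : ℤ) := by
  have := Set.ncard_diff_add_ncard_of_subset h (Set.toFinite Y)
  omega

lemma delta_empty : G.delta (∅ : Set E) = 0 := by
  simp [Multigraph.delta, verts_empty]

/-- Key counting lemma: subgraph of a min-degree-2 graph has smaller delta,
with equality only if the complement is a union of cycle components. -/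
lemma delta_key {X Y : Set E} (hXY : X ⊆ Y)
    (hdeg : ∀ v ∈ G.verts Y, 2 ≤ G.deg Y v) :
    G.delta X ≤ G.delta Y ∧
      (G.delta X = G.delta Y → X ≠ Y → ∃ f ∈ Y, G.IsCycleSet (G.edgeComponent Y f)) := by
  classical
  set W : Set E := Y \ X with hW
  set N : Set V := G.verts Y \ G.verts X with hN
  have hWY : W ⊆ Y := Set.diff_subset
  have step0 : ∀ v ∈ N, ∀ g ∈ Y, v ∈ G.inc g → g ∈ W := by
    rintro v ⟨hvY, hvX⟩ g hg hvg
    refine ⟨hg, fun hgX => hvX ⟨g, hgX, hvg⟩⟩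
  have step1 : ∀ v ∈ N, G.deg W v = G.deg Y v :=
    fun v hv => deg_congr hWY (step0 v hv)
  have step2 : N ⊆ G.verts W := by
    intro v hv
    refine verts_of_deg_pos ?_
    have := hdeg v hv.1
    rw [step1 v hv]; omega
  have hsub : N.toFinite.toFinset ⊆ (G.verts W).toFinite.toFinset := by
    intro v hv
    rw [Set.Finite.mem_toFinset] at hv ⊢
    exact step2 hv
  have hsum : ∑ v ∈ N.toFinite.toFinset, G.deg W v
      ≤ ∑ v ∈ (G.verts W).toFinite.toFinset, G.deg W v :=
    Finset.sum_le_sum_of_subset hsub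
  have hlow : 2 * N.ncard ≤ ∑ v ∈ N.toFinite.toFinset, G.deg W v := by
    have : N.toFinite.toFinset.card • 2 ≤ ∑ v ∈ N.toFinite.toFinset, G.deg W v := by
      refine Finset.card_nsmul_le_sum _ _ _ fun v hv => ?_
      rw [Set.Finite.mem_toFinset] at hv
      rw [step1 v hv]
      exact hdeg v hv.1
    rwa [smul_eq_mul, mul_comm, ← Set.ncard_eq_toFinset_card] at this
  have hhand : ∑ v ∈ (G.verts W).toFinite.toFinset, G.deg W v = 2 * W.ncard :=
    handshake W
  have hNW : N.ncard ≤ W.ncard := by omega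
  have hvXY : G.verts X ⊆ G.verts Y := verts_mono hXY
  have hWcard : ((W.ncard : ℤ)) = (Y.ncard : ℤ) - X.ncard := ncard_diff_int hXY
  have hNcard : ((N.ncard : ℤ)) = ((G.verts Y).ncard : ℤ) - (G.verts X).ncard :=
    ncard_diff_int hvXY
  have hdelta : G.delta Y - G.delta X = (W.ncard : ℤ) - N.ncard := by
    unfold Multigraph.delta; omega
  constructor
  · omega
  · intro heq hne
    have hWne : W.Nonempty := by
      rw [hW, Set.diff_nonempty]
      intro hYX
      exact hne (Set.Subset.antisymm hXY hYX)
    have hcards : W.ncard = N.ncard := by omega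
    -- all inequalities are equalities
    have hsum_eq : ∑ v ∈ N.toFinite.toFinset, G.deg W v
        = ∑ v ∈ (G.verts W).toFinite.toFinset, G.deg W v := by omega
    have hlow_eq : 2 * N.ncard = ∑ v ∈ N.toFinite.toFinset, G.deg W v := by omega
    -- verts W = N
    have hvWN : G.verts W ⊆ N := by
      by_contra hcon
      rw [Set.not_subset] at hcon
      obtain ⟨v, hvW, hvN⟩ := hcon
      have : ∑ x ∈ N.toFinite.toFinset, G.deg W x
          < ∑ x ∈ (G.verts W).toFinite.toFinset, G.deg W x := by
        refine Finset.sum_lt_sum_of_subset hsub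
          (i := v) (by rw [Set.Finite.mem_toFinset]; exact hvW)
          (by rw [Set.Finite.mem_toFinset]; exact hvN) (one_le_deg hvW) ?_
        intros; positivity
      omega
    have hdegs : ∀ v ∈ N, G.deg W v = 2 := by
      by_contra hcon
      push_neg at hcon
      obtain ⟨v, hv, hne2⟩ := hcon
      have hge : ∀ u ∈ N.toFinite.toFinset, 2 ≤ G.deg W u := by
        intro u hu
        rw [Set.Finite.mem_toFinset] at hu
        rw [step1 u hu]; exact hdeg u hu.1
      have hstrict : ∑ u ∈ N.toFinite.toFinset, 2 < ∑ u ∈ N.toFinite.toFinset, G.deg W u := by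
        refine Finset.sum_lt_sum hge ⟨v, by rw [Set.Finite.mem_toFinset]; exact hv, ?_⟩
        have := hge v (by rw [Set.Finite.mem_toFinset]; exact hv)
        omega
      rw [Finset.sum_const, smul_eq_mul, ← Set.ncard_eq_toFinset_card, mul_comm] at hstrict
      omega
    obtain ⟨f, hfW⟩ := hWne
    refine ⟨f, hWY hfW, ?_⟩
    -- the component of f in Y is contained in W
    have hSclosed : ∀ g ∈ Y, ∀ a ∈ G.inc g, a ∈ G.verts W → ∀ b ∈ G.inc g, b ∈ G.verts W := by
      intro g hg a ha haW b hb
      have hgW : g ∈ W := step0 a (hvWN haW) g hg ha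
      exact ⟨g, hgW, hb⟩
    have hcompW : G.edgeComponent Y f ⊆ W := by
      rintro g ⟨hgY, a, ha, b, hb, hr⟩
      have haW : a ∈ G.verts W := ⟨f, hfW, ha⟩
      have hbW : b ∈ G.verts W := reach_closed hSclosed hr haW
      exact step0 b (hvWN hbW) g hgY hb
    refine ⟨⟨f, mem_edgeComponent_self (hWY hfW)⟩, connectedOn_edgeComponent (hWY hfW), ?_⟩
    intro v hv
    have hvW : v ∈ G.verts W := verts_mono hcompW hv
    rw [deg_edgeComponent (hWY hfW) hv, ← step1 v (hvWN hvW)]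
    exact hdegs v (hvWN hvW)

lemma delta_mono {X Y : Set E} (hXY : X ⊆ Y)
    (hdeg : ∀ v ∈ G.verts Y, 2 ≤ G.deg Y v) : G.delta X ≤ G.delta Y :=
  (delta_key hXY hdeg).1

lemma delta_strict {X Y : Set E} (hXY : X ⊆ Y) (hne : X ≠ Y) (hY : G.CactiSet Y) :
    G.delta X < G.delta Y := by
  obtain ⟨hle, heq⟩ := delta_key hXY hY.1
  refine lt_of_le_of_ne hle fun h => ?_
  obtain ⟨f, hf, hc⟩ := heq h hne
  exact hY.2 f hf hc

/-- A component of a supergraph of a cacti graph containing one of its edges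
is never a cycle. -/
lemma no_new_cycle {C D : Set E} (hC : G.CactiSet C) (hCD : C ⊆ D) {f : E}
    (hf : f ∈ C) : ¬ G.IsCycleSet (G.edgeComponent D f) := by
  intro hZ
  have hfD : f ∈ D := hCD hf
  set Z : Set E := G.edgeComponent D f with hZdef
  set Cc : Set E := G.edgeComponent C f with hCcdef
  have hCcZ : Cc ⊆ Z := by
    rintro g ⟨hgC, a, ha, b, hb, hr⟩
    exact ⟨hCD hgC, a, ha, b, hb, reach_mono hCD hr⟩
  have habsorb : ∀ v ∈ G.verts Cc, ∀ g ∈ Z, v ∈ G.inc g → g ∈ Cc := by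
    intro v hv g hg hvg
    have hvC : v ∈ G.verts C := verts_mono edgeComponent_subset hv
    have hdC : 2 ≤ G.deg Cc v := by
      rw [deg_edgeComponent hf hv]
      exact hC.1 v hvC
    have hvZ : v ∈ G.verts Z := verts_mono hCcZ hv
    have hdZ : G.deg Z v = 2 := hZ.2.2 v hvZ
    have hsub1 : {e ∈ Cc | v ∈ G.inc e} ⊆ {e ∈ Z | v ∈ G.inc e} := by
      rintro x ⟨hx, hx2⟩; exact ⟨hCcZ hx, hx2⟩
    have hsub2 : {e ∈ Cc | G.inc e = s(v, v)} ⊆ {e ∈ Z | G.inc e = s(v, v)} := by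
      rintro x ⟨hx, hx2⟩; exact ⟨hCcZ hx, hx2⟩
    have hc1 : {e ∈ Cc | v ∈ G.inc e}.ncard ≤ {e ∈ Z | v ∈ G.inc e}.ncard :=
      Set.ncard_le_ncard hsub1 (Set.toFinite _)
    have hc2 : {e ∈ Cc | G.inc e = s(v, v)}.ncard ≤ {e ∈ Z | G.inc e = s(v, v)}.ncard :=
      Set.ncard_le_ncard hsub2 (Set.toFinite _)
    rw [deg_def] at hdC hdZ
    have hkeep : {e ∈ Z | v ∈ G.inc e}.ncard ≤ {e ∈ Cc | v ∈ G.inc e}.ncard := by omega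
    have heq1 : {e ∈ Cc | v ∈ G.inc e} = {e ∈ Z | v ∈ G.inc e} :=
      Set.eq_of_subset_of_ncard_le hsub1 hkeep (Set.toFinite _)
    have : g ∈ {e ∈ Cc | v ∈ G.inc e} := heq1 ▸ (⟨hg, hvg⟩ : g ∈ {e ∈ Z | v ∈ G.inc e})
    exact this.1
  obtain ⟨a0, ha0⟩ := sym2_mem_exists (G.inc f)
  have hfCc : f ∈ Cc := mem_edgeComponent_self hf
  have hfZ : f ∈ Z := mem_edgeComponent_self hfD
  have ha0Cc : a0 ∈ G.verts Cc := ⟨f, hfCc, ha0⟩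
  have ha0Z : a0 ∈ G.verts Z := ⟨f, hfZ, ha0⟩
  have hvZC : G.verts Z ⊆ G.verts Cc := by
    intro w hw
    have hrw : G.Reach Z a0 w := hZ.2.1 a0 ha0Z w hw
    refine reach_closed (S := G.verts Cc) ?_ hrw ha0Cc
    intro g hg a ha haC b hb
    exact ⟨g, habsorb a haC g hg ha, hb⟩
  have hZCc : Z ⊆ Cc := by
    intro g hg
    obtain ⟨b, hb⟩ := sym2_mem_exists (G.inc g)
    exact habsorb b (hvZC ⟨g, hg, hb⟩) g hg hb
  have hEq : Cc = Z := Set.Subset.antisymm hCcZ hZCc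
  rw [← hEq] at hZ
  exact hC.2 f hf hZ

lemma cacti_union {C₁ C₂ : Set E} (h1 : G.CactiSet C₁) (h2 : G.CactiSet C₂) :
    G.CactiSet (C₁ ∪ C₂) := by
  constructor
  · intro v hv
    rw [verts_union] at hv
    rcases hv with hv | hv
    · exact le_trans (h1.1 v hv) (deg_mono Set.subset_union_left v)
    · exact le_trans (h2.1 v hv) (deg_mono Set.subset_union_right v)
  · intro f hf
    rcases hf with hf | hf
    · exact no_new_cycle h1 Set.subset_union_left hf
    · exact no_new_cycle h2 Set.subset_union_right hf

/-- Every graph contains a subgraph with min degree 2 and at least the same delta. -/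
lemma exists_kernel : ∀ (n : ℕ) (X : Set E), X.ncard ≤ n →
    ∃ K, K ⊆ X ∧ (∀ v ∈ G.verts K, 2 ≤ G.deg K v) ∧ G.delta X ≤ G.delta K := by
  intro n
  induction n with
  | zero =>
      intro X hX
      refine ⟨X, Set.Subset.rfl, ?_, le_rfl⟩
      have : X = ∅ := (Set.ncard_eq_zero (Set.toFinite X)).mp (by omega)
      subst this
      intro v hv
      rw [verts_empty] at hv
      exact absurd hv (Set.notMem_empty v)
  | succ n ih =>
      intro X hX
      by_cases hmin : ∀ v ∈ G.verts X, 2 ≤ G.deg X v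
      · exact ⟨X, Set.Subset.rfl, hmin, le_rfl⟩
      · push_neg at hmin
        obtain ⟨v, hv, hdeg⟩ := hmin
        have h1le : 1 ≤ G.deg X v := one_le_deg hv
        have hba : {e ∈ X | G.inc e = s(v, v)}.ncard ≤ {e ∈ X | v ∈ G.inc e}.ncard :=
          Set.ncard_le_ncard loops_subset (Set.toFinite _)
        have ha : {e ∈ X | v ∈ G.inc e}.ncard = 1 := by
          rw [deg_def] at hdeg h1le; omega
        obtain ⟨f, hfeq⟩ := Set.ncard_eq_one.mp ha
        have hfX : f ∈ X ∧ v ∈ G.inc f := by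
          have : f ∈ {e ∈ X | v ∈ G.inc e} := by rw [hfeq]; rfl
          exact this
        have hfsub : ({f} : Set E) ⊆ X := by rintro x rfl; exact hfX.1
        set X' : Set E := X \ {f} with hX'
        have hvX' : G.verts X' ⊆ G.verts X \ {v} := by
          rintro u ⟨g, ⟨hgX, hgf⟩, hug⟩
          refine ⟨⟨g, hgX, hug⟩, fun huv => hgf ?_⟩
          have huv' : u = v := huv
          have hgmem : g ∈ {e ∈ X | v ∈ G.inc e} := ⟨hgX, huv' ▸ hug⟩
          rw [hfeq] at hgmem
          exact hgmem
        have hvsub : ({v} : Set V) ⊆ G.verts X := by rintro x rfl; exact hv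
        have hcardX' : (X'.ncard : ℤ) = (X.ncard : ℤ) - 1 := by
          rw [hX', ncard_diff_int hfsub, Set.ncard_singleton]; norm_num
        have hvcard : ((G.verts X').ncard : ℤ) ≤ ((G.verts X).ncard : ℤ) - 1 := by
          have h1 : (G.verts X').ncard ≤ (G.verts X \ {v}).ncard :=
            Set.ncard_le_ncard hvX' (Set.toFinite _)
          have h2 : (((G.verts X \ {v}).ncard : ℤ)) = ((G.verts X).ncard : ℤ) - 1 := by
            rw [ncard_diff_int hvsub, Set.ncard_singleton]; norm_num
          omega
        have hdelta : G.delta X ≤ G.delta X' := by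
          unfold Multigraph.delta; omega
        obtain ⟨K, hK1, hK2, hK3⟩ := ih X' (by omega)
        exact ⟨K, hK1.trans Set.diff_subset, hK2, hdelta.trans hK3⟩

/-- From a min-degree-2 graph one can remove cycle components to obtain a
cacti subgraph with the same delta. -/
lemma exists_cacti : ∀ (n : ℕ) (X : Set E), X.ncard ≤ n →
    (∀ v ∈ G.verts X, 2 ≤ G.deg X v) →
    ∃ K, K ⊆ X ∧ G.CactiSet K ∧ G.delta X ≤ G.delta K := by
  intro n
  induction n with
  | zero =>
      intro X hX hmin
      have : X = ∅ := (Set.ncard_eq_zero (Set.toFinite X)).mp (by omega)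
      subst this
      refine ⟨∅, Set.Subset.rfl, ⟨hmin, ?_⟩, le_rfl⟩
      intro e he
      exact absurd he (Set.notMem_empty e)
  | succ n ih =>
      intro X hX hmin
      by_cases hcyc : ∀ e ∈ X, ¬ G.IsCycleSet (G.edgeComponent X e)
      · exact ⟨X, Set.Subset.rfl, ⟨hmin, hcyc⟩, le_rfl⟩
      · push_neg at hcyc
        obtain ⟨e, he, hZ⟩ := hcyc
        set Z : Set E := G.edgeComponent X e with hZdef
        have hZX : Z ⊆ X := edgeComponent_subset
        have hvZX : G.verts Z ⊆ G.verts X := verts_mono hZX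
        set X' : Set E := X \ Z with hX'
        have hverts : G.verts X' = G.verts X \ G.verts Z := by
          ext u
          constructor
          · rintro ⟨g, ⟨hgX, hgZ⟩, hug⟩
            exact ⟨⟨g, hgX, hug⟩, fun huZ => hgZ (edgeComponent_closed he huZ hgX hug)⟩
          · rintro ⟨⟨g, hgX, hug⟩, huZ⟩
            exact ⟨g, ⟨hgX, fun hgZ => huZ ⟨g, hgZ, hug⟩⟩, hug⟩
        -- a cycle has as many edges as vertices
        have hZcard : Z.ncard = (G.verts Z).ncard := by
          have h1 := handshake (G := G) Z
          have h2 : ∑ v ∈ (G.verts Z).toFinite.toFinset, G.deg Z v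
              = ∑ v ∈ (G.verts Z).toFinite.toFinset, 2 := by
            refine Finset.sum_congr rfl fun v hv => ?_
            rw [Set.Finite.mem_toFinset] at hv
            exact hZ.2.2 v hv
          rw [h2, Finset.sum_const, smul_eq_mul, ← Set.ncard_eq_toFinset_card, mul_comm] at h1
          omega
        have hcard1 : (X'.ncard : ℤ) = (X.ncard : ℤ) - Z.ncard := ncard_diff_int hZX
        have hcard2 : ((G.verts X').ncard : ℤ) = ((G.verts X).ncard : ℤ) - (G.verts Z).ncard := by
          rw [hverts]; exact ncard_diff_int hvZX
        have hdelta : G.delta X ≤ G.delta X' := by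
          unfold Multigraph.delta; omega
        have hmin' : ∀ v ∈ G.verts X', 2 ≤ G.deg X' v := by
          intro v hv
          have hvd := hverts ▸ hv
          have : G.deg X' v = G.deg X v := by
            refine deg_congr Set.diff_subset fun g hg hvg => ⟨hg, fun hgZ => ?_⟩
            exact hvd.2 ⟨g, hgZ, hvg⟩
          rw [this]
          exact hmin v hvd.1
        have hlt : X'.ncard < X.ncard := by
          obtain ⟨z, hz⟩ := hZ.1
          refine Set.ncard_lt_ncard ⟨Set.diff_subset, fun hsub => ?_⟩ (Set.toFinite X)
          exact (hsub (hZX hz)).2 hz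
        obtain ⟨K, hK1, hK2, hK3⟩ := ih X' (by omega) hmin'
        exact ⟨K, hK1.trans Set.diff_subset, hK2, hdelta.trans hK3⟩

/-- A cacti graph with delta at least `k` contains a `k`-circuit. -/
lemma exists_circuit (k : ℕ) : ∀ (n : ℕ) (X : Set E), X.ncard ≤ n →
    G.CactiSet X → (k : ℤ) ≤ G.delta X → ∃ C, C ⊆ X ∧ G.CircuitSet k C := by
  intro n
  induction n with
  | zero =>
      intro X hX hc hk
      have hXe : X = ∅ := (Set.ncard_eq_zero (Set.toFinite X)).mp (by omega)
      have h0 : G.delta X = 0 := by rw [hXe]; exact delta_empty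
      exact ⟨X, Set.Subset.rfl, by rw [h0] at hk ⊢; omega, hc⟩
  | succ n ih =>
      intro X hX hc hk
      by_cases heq : G.delta X = (k : ℤ)
      · exact ⟨X, Set.Subset.rfl, heq, hc⟩
      · have hk1 : (k : ℤ) + 1 ≤ G.delta X := by omega
        have hne : X.Nonempty := by
          rw [Set.nonempty_iff_ne_empty]
          rintro rfl
          rw [delta_empty] at hk1
          omega
        obtain ⟨f, hf⟩ := hne
        have hfsub : ({f} : Set E) ⊆ X := by rintro x rfl; exact hf
        set X₁ : Set E := X \ {f} with hX₁
        have hcard : (X₁.ncard : ℤ) = (X.ncard : ℤ) - 1 := by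
          rw [hX₁, ncard_diff_int hfsub, Set.ncard_singleton]; norm_num
        have hvle : (G.verts X₁).ncard ≤ (G.verts X).ncard :=
          Set.ncard_le_ncard (verts_mono Set.diff_subset) (Set.toFinite _)
        have hd1 : (k : ℤ) ≤ G.delta X₁ := by
          unfold Multigraph.delta at hk1 ⊢; omega
        obtain ⟨K, hK1, hK2, hK3⟩ := exists_kernel (G := G) X₁.ncard X₁ le_rfl
        obtain ⟨K', hK'1, hK'2, hK'3⟩ := exists_cacti (G := G) K.ncard K le_rfl hK2
        have hsub : K' ⊆ X₁ := hK'1.trans hK1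
        have hcardK' : K'.ncard ≤ n := by
          have h1 : K'.ncard ≤ X₁.ncard := Set.ncard_le_ncard hsub (Set.toFinite _)
          omega
        obtain ⟨C, hC1, hC2⟩ := ih K' hcardK' hK'2 (by omega)
        exact ⟨C, hC1.trans (hsub.trans Set.diff_subset), hC2⟩

end Multigraph

/-- for `k ≥ 1` the family `𝒞_k(G)` satisfies the circuit
axioms: it is an antichain and satisfies weak circuit elimination. -/
theorem stmt11 {V E : Type*} [Fintype V] [Fintype E] (G : Multigraph V E)
    (k : ℕ) (hk : 1 ≤ k) :
    (∀ C₁ C₂ : Set E, G.CircuitSet k C₁ → G.CircuitSet k C₂ → C₁ ⊆ C₂ → C₁ = C₂) ∧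
    (∀ (C₁ C₂ : Set E) (e : E), G.CircuitSet k C₁ → G.CircuitSet k C₂ →
      C₁ ≠ C₂ → e ∈ C₁ ∩ C₂ →
        ∃ C₃ : Set E, G.CircuitSet k C₃ ∧ C₃ ⊆ (C₁ ∪ C₂) \ {e}) := by
  classical
  have hanti : ∀ C₁ C₂ : Set E, G.CircuitSet k C₁ → G.CircuitSet k C₂ → C₁ ⊆ C₂ → C₁ = C₂ := by
    intro C₁ C₂ h1 h2 hsub
    by_contra hne
    have hlt := Multigraph.delta_strict hsub hne h2.2
    rw [h1.1, h2.1] at hlt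
    omega
  refine ⟨hanti, ?_⟩
  intro C₁ C₂ e h1 h2 hne he
  set D : Set E := C₁ ∪ C₂ with hD
  have hDcacti : G.CactiSet D := Multigraph.cacti_union h1.2 h2.2
  have hC1D : C₁ ⊆ D := Set.subset_union_left
  have hneD : C₁ ≠ D := by
    intro h
    have hsub : C₂ ⊆ C₁ := by rw [h]; exact Set.subset_union_right
    exact hne (hanti C₂ C₁ h2 h1 hsub).symm
  have hlt : (k : ℤ) < G.delta D := by
    have h := Multigraph.delta_strict hC1D hneD hDcacti
    rwa [h1.1] at h
  have heD : e ∈ D := Or.inl he.1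
  have hesub : ({e} : Set E) ⊆ D := by rintro x rfl; exact heD
  set D' : Set E := D \ {e} with hD'
  have hcard : (D'.ncard : ℤ) = (D.ncard : ℤ) - 1 := by
    rw [hD', Multigraph.ncard_diff_int hesub, Set.ncard_singleton]; norm_num
  have hvle : (G.verts D').ncard ≤ (G.verts D).ncard :=
    Set.ncard_le_ncard (Multigraph.verts_mono Set.diff_subset) (Set.toFinite _)
  have hd' : (k : ℤ) ≤ G.delta D' := by
    unfold Multigraph.delta at hlt ⊢; omega
  obtain ⟨K, hK1, hK2, hK3⟩ := Multigraph.exists_kernel (G := G) D'.ncard D' le_rfl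
  obtain ⟨K', hK'1, hK'2, hK'3⟩ := Multigraph.exists_cacti (G := G) K.ncard K le_rfl hK2
  obtain ⟨C₃, hC3sub, hC3⟩ :=
    Multigraph.exists_circuit (G := G) k K'.ncard K' le_rfl hK'2 (by omega)
  exact ⟨C₃, hC3, hC3sub.trans (hK'1.trans hK1)⟩
end
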